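/- arXiv:1709.00552 — 2 statements merged into one kernel-verified Lean document; each statement's English description precedes it below -/
import Mathlib

section
/- For k ∈ {0,...,d−1} and r ∈ {1,...,d−1}, with ℓ = k+r mod d, the average over all a ∈ {0,1}^d with a_k ⊕ a_ℓ = s' of |μ_a⟩⟨μ_a| equals 𝟙/d + (−1)^{s'}(|k⟩⟨ℓ| + |ℓ⟩⟨k|)/d. -/
/-- `|μ_a⟩ = (1/√d) Σ_t (−1)^{a_t} |t⟩`. -/
noncomputable def muVec (d : ℕ) (a : Fin d → Bool) : Fin d → ℂ :=
  fun t => (((1 / Real.sqrt d) * (if a t then -1 else 1) : ℝ) : ℂ)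

/-!
Entrywise, `|μ_a⟩⟨μ_a| = (1/d) (σ(a_i) σ(a_j))_{ij}` with `σ(b) = ±1`. On the fibre
`{a | a_k ⊕ a_ℓ = s'}` the diagonal entries are `1` and the `(k, ℓ)`, `(ℓ, k)` entries are
`σ(a_k) σ(a_ℓ) = σ(s')`; every other off-diagonal entry `(i, j)` involves a coordinate
`m ∉ {k, ℓ}`, and flipping `a_m` is a sign-reversing involution of the fibre, so those entries
sum to zero. Flipping `a_ℓ` instead exchanges the fibre with its complement, so it has
`2^(d-1)` elements.
-/

open Finset

section Signs

variable {R : Type*} [CommRing R]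

def boolSign (b : Bool) : R := if b then -1 else 1

lemma boolSign_mul_self (b : Bool) : boolSign b * boolSign b = (1 : R) := by
  cases b <;> simp [boolSign]

lemma boolSign_not (b : Bool) : boolSign (!b) = -(boolSign b : R) := by
  cases b <;> simp [boolSign]

lemma boolSign_xor (b c : Bool) : boolSign (xor b c) = (boolSign b * boolSign c : R) := by
  cases b <;> cases c <;> simp [boolSign]

end Signs

section XorFiber

variable {ι : Type*} [DecidableEq ι]

def flipAt (m : ι) (a : ι → Bool) : ι → Bool := Function.update a m (!a m)

@[simp] lemma flipAt_self (m : ι) (a : ι → Bool) : flipAt m a m = !a m := by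
  simp [flipAt]

@[simp] lemma flipAt_of_ne {m t : ι} (h : t ≠ m) (a : ι → Bool) : flipAt m a t = a t := by
  simp [flipAt, h]

lemma flipAt_involutive (m : ι) : Function.Involutive (flipAt m) := by
  intro a
  simp [flipAt, Function.update_idem]

lemma flipAt_ne_self (m : ι) (a : ι → Bool) : flipAt m a ≠ a :=
  fun h => Bool.not_ne_self (a m) (by rw [← flipAt_self m a, h])

variable [Fintype ι]

def xorFiber (k l : ι) (s : Bool) : Finset (ι → Bool) :=
  univ.filter fun a => xor (a k) (a l) = s

lemma mem_xorFiber {k l : ι} {s : Bool} {a : ι → Bool} :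
    a ∈ xorFiber k l s ↔ xor (a k) (a l) = s := by
  simp [xorFiber]

lemma flipAt_mem_xorFiber_iff {k l m : ι} (hmk : k ≠ m) (hml : l ≠ m) {s : Bool}
    {a : ι → Bool} : flipAt m a ∈ xorFiber k l s ↔ a ∈ xorFiber k l s := by
  simp [mem_xorFiber, hmk, hml]

lemma flipAt_mem_xorFiber_not_iff {k l : ι} (hkl : k ≠ l) {s : Bool} {a : ι → Bool} :
    flipAt l a ∈ xorFiber k l (!s) ↔ a ∈ xorFiber k l s := by
  simp [mem_xorFiber, hkl]

lemma card_xorFiber {k l : ι} (hkl : k ≠ l) (s : Bool) :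
    #(xorFiber k l s) = 2 ^ (Fintype.card ι - 1) := by
  have hflip : #(xorFiber k l s) = #(xorFiber k l (!s)) :=
    card_equiv (flipAt_involutive l).toPerm fun a => (flipAt_mem_xorFiber_not_iff hkl).symm
  have hsplit : #(xorFiber k l s) + #(xorFiber k l (!s)) = 2 ^ Fintype.card ι := by
    have hnot : xorFiber k l (!s) = univ.filter fun a => ¬xor (a k) (a l) = s := by
      ext a
      cases s <;> simp [mem_xorFiber]
    rw [hnot, xorFiber, card_filter_add_card_filter_not]
    simp
  obtain ⟨n, hn⟩ := Nat.exists_eq_add_one_of_ne_zero (Fintype.card_pos_iff.mpr ⟨k⟩).ne'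
  rw [hn, pow_succ] at hsplit
  rw [hn, Nat.add_sub_cancel]
  omega

lemma sum_xorFiber_eq_zero_of_odd {M : Type*} [AddCommGroup M] {k l m : ι}
    (hkm : k ≠ m) (hlm : l ≠ m) (s : Bool) {f : (ι → Bool) → M}
    (hf : ∀ a, f (flipAt m a) = -f a) : ∑ a ∈ xorFiber k l s, f a = 0 :=
  sum_involution (fun a _ => flipAt m a) (fun a _ => by rw [hf, add_neg_cancel])
    (fun a _ _ => flipAt_ne_self m a) (fun _ ha => (flipAt_mem_xorFiber_iff hkm hlm).mpr ha)
    (fun a _ => flipAt_involutive m a)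

variable {R : Type*} [CommRing R] {k l : ι}

lemma sum_xorFiber_boolSign_mul_self (hkl : k ≠ l) (s : Bool) (i : ι) :
    ∑ a ∈ xorFiber k l s, boolSign (a i) * boolSign (a i) = (2 ^ (Fintype.card ι - 1) : R) := by
  simp [boolSign_mul_self, card_xorFiber hkl]

lemma sum_xorFiber_boolSign_mul (hkl : k ≠ l) (s : Bool) :
    ∑ a ∈ xorFiber k l s, boolSign (a k) * boolSign (a l) =
      (2 ^ (Fintype.card ι - 1) * boolSign s : R) := by
  have hconst : ∀ a ∈ xorFiber k l s, boolSign (a k) * boolSign (a l) = (boolSign s : R) :=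
    fun a ha => by rw [← boolSign_xor, mem_xorFiber.mp ha]
  simp [sum_congr rfl hconst, card_xorFiber hkl]

lemma sum_xorFiber_boolSign_mul_eq_zero {i j : ι} (hij : i ≠ j) (hki : k ≠ i) (hli : l ≠ i)
    (s : Bool) : ∑ a ∈ xorFiber k l s, boolSign (a i) * boolSign (a j) = (0 : R) :=
  sum_xorFiber_eq_zero_of_odd hki hli s fun a => by
    rw [flipAt_self, flipAt_of_ne hij.symm, boolSign_not, neg_mul]

lemma sum_xorFiber_outer_boolSign (hkl : k ≠ l) (s : Bool) :
    ∑ a ∈ xorFiber k l s, Matrix.of (fun i j => boolSign (a i) * boolSign (a j) : ι → ι → R) =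
      (2 ^ (Fintype.card ι - 1) : R) •
        (1 + (boolSign s : R) • (Matrix.single k l 1 + Matrix.single l k 1)) := by
  ext i j
  simp only [Matrix.sum_apply, Matrix.of_apply, Matrix.smul_apply, Matrix.add_apply,
    Matrix.one_apply, Matrix.single_apply, smul_eq_mul]
  by_cases hij : i = j
  · subst hij
    have hkli : ¬(k = i ∧ l = i) := fun h => hkl (h.1.trans h.2.symm)
    simp [sum_xorFiber_boolSign_mul_self hkl, hkli, and_comm.not.mp hkli]
  by_cases hkli : k = i ∧ l = j
  · obtain ⟨rfl, rfl⟩ := hkli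
    simp [sum_xorFiber_boolSign_mul hkl, hkl]
  by_cases hlki : l = i ∧ k = j
  · obtain ⟨rfl, rfl⟩ := hlki
    rw [sum_congr rfl fun a _ => mul_comm (boolSign (a l) : R) _, sum_xorFiber_boolSign_mul hkl]
    simp [hkl.symm]
  rw [if_neg hij, if_neg hkli, if_neg hlki, zero_add, add_zero, mul_zero, mul_zero]
  by_cases hi : k ≠ i ∧ l ≠ i
  · exact sum_xorFiber_boolSign_mul_eq_zero hij hi.1 hi.2 s
  · have hj : k ≠ j ∧ l ≠ j := by grind
    rw [sum_congr rfl fun a _ => mul_comm (boolSign (a i) : R) _]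
    exact sum_xorFiber_boolSign_mul_eq_zero (Ne.symm hij) hj.1 hj.2 s

end XorFiber

lemma muVec_mul_conj_muVec (d : ℕ) (a : Fin d → Bool) (i j : Fin d) :
    muVec d a i * starRingEnd ℂ (muVec d a j) = (d : ℂ)⁻¹ * (boolSign (a i) * boolSign (a j)) := by
  have hsq : (1 / √(d : ℝ)) * (1 / √(d : ℝ)) = (d : ℝ)⁻¹ := by
    rw [div_mul_div_comm, one_mul, Real.mul_self_sqrt (Nat.cast_nonneg d), one_div]
  have hsqC : ((1 / √(d : ℝ) : ℝ) : ℂ) * ((1 / √(d : ℝ) : ℝ) : ℂ) = (d : ℂ)⁻¹ := by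
    rw [← Complex.ofReal_mul, hsq, Complex.ofReal_inv, Complex.ofReal_natCast]
  simp only [muVec, Complex.ofReal_mul, ← hsqC]
  cases a i <;> cases a j <;> simp [boolSign]

theorem average_mu_outer_general (d : ℕ) [NeZero d]
    (k r : Fin d) (hr : r ≠ 0) (s' : Bool) :
    ((2 : ℂ) ^ (d - 1))⁻¹ •
      ∑ a ∈ Finset.univ.filter (fun a : Fin d → Bool => xor (a k) (a (k + r)) = s'),
        Matrix.of (fun i j => muVec d a i * (starRingEnd ℂ) (muVec d a j)) =
    ((d : ℂ))⁻¹ • (1 : Matrix (Fin d) (Fin d) ℂ) +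
      ((if s' then -1 else 1) / (d : ℂ)) •
        (Matrix.single k (k + r) 1 + Matrix.single (k + r) k 1) := by
  have hkl : k ≠ k + r := by simpa [eq_comm] using hr
  have houter : ∀ a : Fin d → Bool,
      Matrix.of (fun i j => muVec d a i * starRingEnd ℂ (muVec d a j)) =
        (d : ℂ)⁻¹ • Matrix.of (fun i j => boolSign (a i) * boolSign (a j)) := by
    intro a
    ext i j
    simp [muVec_mul_conj_muVec]
  simp_rw [houter, ← Finset.smul_sum]
  change _ • _ • ∑ a ∈ xorFiber k (k + r) s', _ = _
  rw [sum_xorFiber_outer_boolSign hkl, Fintype.card_fin, smul_smul, smul_smul, mul_right_comm,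
    inv_mul_cancel₀ (pow_ne_zero _ two_ne_zero), one_mul]
  change _ = _ + (boolSign s' / (d : ℂ)) • _
  module

/-- for `ℓ = k + r mod d` (`ℓ ≠ k`), the average of `|μ_a⟩⟨μ_a|` over the
`2^(d−1)` strings `a` with `a_k ⊕ a_ℓ = s'` equals `𝟙/d + (−1)^{s'}(|k⟩⟨ℓ| + |ℓ⟩⟨k|)/d`. -/
theorem average_mu_outer (d : ℕ) [NeZero d] (hd : 2 ≤ d)
    (k r : Fin d) (hr : r ≠ 0) (s' : Bool) :
    ((2 : ℂ) ^ (d - 1))⁻¹ •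
      ∑ a ∈ Finset.univ.filter (fun a : Fin d → Bool => xor (a k) (a (k + r)) = s'),
        Matrix.of (fun i j => muVec d a i * (starRingEnd ℂ) (muVec d a j)) =
    ((d : ℂ))⁻¹ • (1 : Matrix (Fin d) (Fin d) ℂ) +
      ((if s' then -1 else 1) / (d : ℂ)) •
        (Matrix.single k (k + r) 1 + Matrix.single (k + r) k 1) :=
  average_mu_outer_general d k r hr s'
end

section
/- Let d ≥ 3 and β ∈ [0,1/2], and for β ≤ β_0 define I(β) = (1−2β)·h((1/(d−2))·(2β/(1−2β))). Then I is concave and increasing in β on [0, β_0], where β_0 < (1/2)·(d−2)/(d−1), and I(β) admits the expansion I(β) = (2β/(d−2))·log₂((d−2)(1−2β)e/(2β)) + O(d^{−2}) as d → ∞ for fixed β bounded away from 1/2. -/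
/-!
Up to the factor `1 / log 2`, `I(β)` is the perspective `y · h(x / y)` of the natural binary
entropy `h` along the affine path `x = 2β/(d-2)`, `y = 1 - 2β`. Perspectives of concave functions
are concave, so `I` is concave as long as `x ≤ y`, i.e. for `β ≤ (d-2)/(2(d-1))`. In terms of
the ratio `t = x / y`, `I'(β)` is a positive multiple of `(d-1) log(1-t) - log t`, which vanishes
exactly when `(1-t)^(d-1) = t`, i.e. at `t = 1 - y_d`, `β = β_0`; a concave function increases up
to a critical point. For the expansion, `y h(x/y) = x log(e y / x) - y ((1-t) log(1-t) + t)` and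
the last bracket lies in `[0, t²]`, so the error is at most `x² / y = O(d⁻²)`.
-/

/-- Binary entropy `h(p) = −p log₂ p − (1−p) log₂(1−p)`. -/
noncomputable def binEnt (p : ℝ) : ℝ := -p * Real.logb 2 p - (1 - p) * Real.logb 2 (1 - p)

/-- The leakage function `I(β) = (1−2β)·h((1/(d−2))·(2β/(1−2β)))`. -/
noncomputable def Ileak (d : ℕ) (β : ℝ) : ℝ :=
  (1 - 2 * β) * binEnt ((1 / ((d : ℝ) - 2)) * (2 * β / (1 - 2 * β)))

open Real Set

section Perspective

variable {E : Type*} [AddCommGroup E] [Module ℝ E]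

noncomputable def perspective (f : E → ℝ) (z : E × ℝ) : ℝ := z.2 * f (z.2⁻¹ • z.1)

theorem ConcaveOn.perspective {s : Set E} {f : E → ℝ} (hf : ConcaveOn ℝ s f) :
    ConcaveOn ℝ {z : E × ℝ | 0 < z.2 ∧ z.2⁻¹ • z.1 ∈ s} (perspective f) := by
  -- `(a y₁ + b y₂)⁻¹ • (a x₁ + b x₂)` is a convex combination of `y₁⁻¹ • x₁` and `y₂⁻¹ • x₂`
  have mix : ∀ ⦃x₁ x₂ : E⦄ ⦃y₁ y₂ a b : ℝ⦄, 0 < y₁ → 0 < y₂ → 0 ≤ a → 0 ≤ b → a + b = 1 →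
      0 < a * y₁ + b * y₂ ∧ 0 ≤ a * y₁ / (a * y₁ + b * y₂) ∧ 0 ≤ b * y₂ / (a * y₁ + b * y₂) ∧
      a * y₁ / (a * y₁ + b * y₂) + b * y₂ / (a * y₁ + b * y₂) = 1 ∧
      (a * y₁ + b * y₂)⁻¹ • (a • x₁ + b • x₂) =
        (a * y₁ / (a * y₁ + b * y₂)) • (y₁⁻¹ • x₁) +
          (b * y₂ / (a * y₁ + b * y₂)) • (y₂⁻¹ • x₂) := by
    intro x₁ x₂ y₁ y₂ a b hy₁ hy₂ ha hb hab
    have hy : 0 < a * y₁ + b * y₂ := by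
      rcases ha.eq_or_lt with rfl | ha
      · simp_all
      · positivity
    refine ⟨hy, by positivity, by positivity, by field_simp, ?_⟩
    simp only [smul_smul, smul_add]
    congr 2 <;> field_simp
  refine ⟨?_, ?_⟩
  · rintro ⟨x₁, y₁⟩ ⟨hy₁, hs₁⟩ ⟨x₂, y₂⟩ ⟨hy₂, hs₂⟩ a b ha hb hab
    dsimp only at hy₁ hs₁ hy₂ hs₂
    obtain ⟨hy, hμ, hν, hμν, hmix⟩ := mix (x₁ := x₁) (x₂ := x₂) hy₁ hy₂ ha hb hab
    refine ⟨hy, ?_⟩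
    simp only [Prod.fst_add, Prod.snd_add, Prod.smul_fst, Prod.smul_snd, smul_eq_mul, hmix]
    exact hf.1 hs₁ hs₂ hμ hν hμν
  · rintro ⟨x₁, y₁⟩ ⟨hy₁, hs₁⟩ ⟨x₂, y₂⟩ ⟨hy₂, hs₂⟩ a b ha hb hab
    dsimp only at hy₁ hs₁ hy₂ hs₂
    obtain ⟨hy, hμ, hν, hμν, hmix⟩ := mix (x₁ := x₁) (x₂ := x₂) hy₁ hy₂ ha hb hab
    have hjensen := hf.2 hs₁ hs₂ hμ hν hμν
    simp only [_root_.perspective, Prod.fst_add, Prod.snd_add, Prod.smul_fst, Prod.smul_snd,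
      smul_eq_mul, hmix]
    calc a * (y₁ * f (y₁⁻¹ • x₁)) + b * (y₂ * f (y₂⁻¹ • x₂))
        = (a * y₁ + b * y₂) * (a * y₁ / (a * y₁ + b * y₂) * f (y₁⁻¹ • x₁) +
            b * y₂ / (a * y₁ + b * y₂) * f (y₂⁻¹ • x₂)) := by field_simp
      _ ≤ _ := mul_le_mul_of_nonneg_left hjensen hy.le

theorem HasDerivAt.perspective {f x y : ℝ → ℝ} {f' x' y' t : ℝ}
    (hf : HasDerivAt f f' ((y t)⁻¹ * x t)) (hx : HasDerivAt x x' t) (hy : HasDerivAt y y' t)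
    (hyt : y t ≠ 0) :
    HasDerivAt (fun t ↦ perspective f (x t, y t))
      (y' * f ((y t)⁻¹ * x t) + f' * (x' - (y t)⁻¹ * x t * y')) t := by
  have := hy.mul (hf.comp t ((hy.inv hyt).mul hx))
  simp only [_root_.perspective, smul_eq_mul]
  refine this.congr_deriv ?_
  simp only [Function.comp_apply, Pi.mul_apply, Pi.inv_apply]
  field_simp
  ring

end Perspective

theorem ConcaveOn.monotoneOn_Icc_of_hasDerivWithinAt_nonneg {f : ℝ → ℝ} {a b f' : ℝ}
    (hf : ConcaveOn ℝ (Icc a b) f) (hb : HasDerivWithinAt f f' (Iio b) b) (hf' : 0 ≤ f') :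
    MonotoneOn f (Icc a b) := by
  intro x hx y hy hxy
  have hbmem : b ∈ Icc a b := right_mem_Icc.2 (hx.1.trans hx.2)
  have hle_b : f x ≤ f b := by
    rcases hx.2.eq_or_lt with rfl | hxb
    · rfl
    · have := hf'.trans (hf.le_slope_of_hasDerivWithinAt_Iio hx hbmem hxb hb)
      rw [slope_def_field, le_div_iff₀ (sub_pos.2 hxb)] at this
      linarith
  exact (le_min le_rfl hle_b).trans (hf.min_le_of_mem_Icc hx hbmem ⟨hxy, hy.2⟩)

theorem abs_one_sub_mul_log_one_sub_add_le {t : ℝ} (ht : t < 1) :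
    |(1 - t) * log (1 - t) + t| ≤ t ^ 2 := by
  have h : 0 < 1 - t := sub_pos.2 ht
  have hlow : 1 - (1 - t)⁻¹ ≤ log (1 - t) := one_sub_inv_le_log_of_pos h
  have hup : log (1 - t) ≤ -t := by linarith [log_le_sub_one_of_pos h]
  have hlow' : -t ≤ (1 - t) * log (1 - t) := by
    have := mul_le_mul_of_nonneg_left hlow h.le
    rwa [mul_sub, mul_inv_cancel₀ h.ne', mul_one, sub_sub_cancel_left] at this
  rw [abs_le]
  constructor <;> nlinarith [sq_nonneg t, mul_le_mul_of_nonneg_left hup h.le]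

theorem abs_perspective_binEntropy_sub_le {x y : ℝ} (hx : 0 < x) (hxy : x < y) :
    |perspective binEntropy (x, y) - x * log (y * exp 1 / x)| ≤ x ^ 2 / y := by
  have hy : 0 < y := hx.trans hxy
  set t := y⁻¹ * x with ht
  have hyt : y * t = x := by rw [ht]; field_simp
  have ht1 : t < 1 := by rw [ht, inv_mul_lt_one₀ hy]; exact hxy
  have key : perspective binEntropy (x, y) - x * log (y * exp 1 / x) =
      -(y * ((1 - t) * log (1 - t) + t)) := by
    simp only [perspective, smul_eq_mul, ← ht, binEntropy]
    rw [log_div (by positivity) hx.ne', log_mul hy.ne' (exp_pos 1).ne', log_exp, ht, mul_inv,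
      inv_inv, log_mul hy.ne' (inv_pos.2 hx).ne', log_inv, log_inv, ← ht]
    linear_combination (log y - log x + 1) * hyt
  rw [key, abs_neg, abs_mul, abs_of_pos hy]
  calc y * |(1 - t) * log (1 - t) + t| ≤ y * t ^ 2 :=
        mul_le_mul_of_nonneg_left (abs_one_sub_mul_log_one_sub_add_le ht1) hy.le
    _ = x ^ 2 / y := by rw [← hyt]; field_simp

theorem binEnt_eq_binEntropy_div (p : ℝ) : binEnt p = binEntropy p / log 2 := by
  simp only [binEnt, binEntropy, logb, log_inv]
  ring

theorem Ileak_eq_perspective (d : ℕ) (β : ℝ) :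
    Ileak d β = perspective binEntropy (2 * β / ((d : ℝ) - 2), 1 - 2 * β) / log 2 := by
  rw [Ileak, binEnt_eq_binEntropy_div, perspective, smul_eq_mul,
    show 1 / ((d : ℝ) - 2) * (2 * β / (1 - 2 * β)) = (1 - 2 * β)⁻¹ * (2 * β / ((d : ℝ) - 2)) by
      ring]
  ring

theorem concaveOn_Ileak {d : ℕ} (hd : 3 ≤ d) :
    ConcaveOn ℝ (Icc 0 ((1 / 2) * ((d : ℝ) - 2) / ((d : ℝ) - 1))) (Ileak d) := by
  have hd' : (3 : ℝ) ≤ d := by exact_mod_cast hd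
  let path : ℝ →ᵃ[ℝ] ℝ × ℝ := AffineMap.lineMap (0, 1) (2 / ((d : ℝ) - 2), -1)
  have hpath (β : ℝ) : path β = (2 * β / ((d : ℝ) - 2), 1 - 2 * β) := by
    simp only [path, AffineMap.lineMap_apply_module', Prod.ext_iff]
    constructor <;> simp <;> ring
  have hconc := (strictConcave_binEntropy.concaveOn.perspective.comp_affineMap path).smul
    (inv_nonneg.2 (log_nonneg one_le_two))
  have hIleak : Ileak d = fun β ↦ (log 2)⁻¹ • (perspective binEntropy ∘ path) β := by
    funext β
    rw [Ileak_eq_perspective, Function.comp_apply, hpath, smul_eq_mul, inv_mul_eq_div]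
  rw [hIleak]
  refine hconc.subset ?_ (convex_Icc _ _)
  rintro β ⟨hβ0, hβ1⟩
  have hβ : 2 * β * ((d : ℝ) - 1) ≤ (d : ℝ) - 2 := by
    rw [le_div_iff₀ (by linarith)] at hβ1
    linarith
  have hy : 0 < 1 - 2 * β := by nlinarith
  simp only [mem_preimage, hpath, mem_ofPred_eq, smul_eq_mul, mem_Icc]
  refine ⟨hy, mul_nonneg (inv_nonneg.2 hy.le) (div_nonneg (by linarith) (by linarith)), ?_⟩
  rw [inv_mul_le_one₀ hy, div_le_iff₀ (by linarith)]
  linarith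

noncomputable def betaZero (d : ℕ) (y : ℝ) : ℝ := (1 / 2) * (1 + 1 / (((d : ℝ) - 2) * (1 - y)))⁻¹

theorem betaZero_lt {d : ℕ} {y : ℝ} (hd : 3 ≤ d) (hy : 0 < y) (hy1 : y < 1) :
    betaZero d y < (1 / 2) * ((d : ℝ) - 2) / ((d : ℝ) - 1) := by
  have hd' : (3 : ℝ) ≤ d := by exact_mod_cast hd
  have hM : 0 < ((d : ℝ) - 2) * (1 - y) := mul_pos (by linarith) (by linarith)
  have hlt : ((d : ℝ) - 2) * (1 - y) / (((d : ℝ) - 2) * (1 - y) + 1) * ((d : ℝ) - 1) < d - 2 := by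
    rw [div_mul_eq_mul_div, div_lt_iff₀ (by positivity)]
    nlinarith
  rw [betaZero, one_add_div hM.ne', inv_div, lt_div_iff₀ (by linarith)]
  linarith

theorem hasDerivAt_Ileak_betaZero {d : ℕ} {y : ℝ} (hd : 3 ≤ d) (hy : 0 < y)
    (hroot : y ^ (d - 1) + y - 1 = 0) : HasDerivAt (Ileak d) 0 (betaZero d y) := by
  set a : ℝ := (d : ℝ) - 2 with ha_def
  have ha : 0 < a := by
    have : (3 : ℝ) ≤ d := by exact_mod_cast hd
    linarith
  have hpow : y ^ (d - 1) = 1 - y := by linarith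
  have hy1 : 0 < 1 - y := hpow ▸ pow_pos hy _
  have hlog : log (1 - y) = (a + 1) * log y := by
    rw [← hpow, log_pow, Nat.cast_sub (by omega), ha_def]
    push_cast
    ring
  set β := betaZero d y
  have hβ : 1 - 2 * β = (a * (1 - y) + 1)⁻¹ := by
    simp only [β, betaZero, ← ha_def]
    field_simp
    ring
  -- at `β₀` the ratio `t = (2β/(d-2))/(1-2β)` equals `1 - y`, where `(1 - t)^(d-1) = t`
  have ht : (1 - 2 * β)⁻¹ * (2 * β / a) = 1 - y := by
    rw [show 2 * β = 1 - (1 - 2 * β) by ring, hβ]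
    field_simp
    ring
  have hx' : HasDerivAt (fun β ↦ 2 * β / a) (2 / a) β := by
    simpa using ((hasDerivAt_id β).const_mul 2).div_const a
  have hy' : HasDerivAt (fun β : ℝ ↦ 1 - 2 * β) (-2) β := by
    simpa using ((hasDerivAt_id β).const_mul (2 : ℝ)).const_sub 1
  have hf : HasDerivAt binEntropy (log (1 - (1 - y)) - log (1 - y))
      ((1 - 2 * β)⁻¹ * (2 * β / a)) := by
    rw [ht]
    exact hasDerivAt_binEntropy hy1.ne' (by linarith)
  have hderiv := (hf.perspective hx' hy' (by rw [hβ]; positivity)).div_const (log 2)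
  rw [show Ileak d = _ from funext (Ileak_eq_perspective d)]
  refine hderiv.congr_deriv ?_
  rw [ht, binEntropy_one_sub, binEntropy, log_inv, log_inv, hlog, sub_sub_cancel]
  field_simp
  ring

theorem abs_Ileak_sub_le_sq {d : ℕ} {β : ℝ} (hd : 3 ≤ d) (hβ : 0 < β)
    (hβd : 2 * β / ((d : ℝ) - 2) < 1 - 2 * β) :
    |Ileak d β - 2 * β / ((d : ℝ) - 2) *
        logb 2 (((d : ℝ) - 2) * (1 - 2 * β) * exp 1 / (2 * β))| ≤
      (2 * β / ((d : ℝ) - 2)) ^ 2 / (1 - 2 * β) / log 2 := by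
  have ha : (0 : ℝ) < d - 2 := by
    have : (3 : ℝ) ≤ d := by exact_mod_cast hd
    linarith
  have hlog2 : 0 < log 2 := log_pos one_lt_two
  rw [Ileak_eq_perspective, logb, show ((d : ℝ) - 2) * (1 - 2 * β) * exp 1 / (2 * β) =
      (1 - 2 * β) * exp 1 / (2 * β / ((d : ℝ) - 2)) by field_simp, mul_div_assoc', ← sub_div,
    abs_div, abs_of_pos hlog2]
  gcongr
  exact abs_perspective_binEntropy_sub_le (by positivity) hβd

theorem abs_Ileak_sub_le_div_sq {d : ℕ} {ε β : ℝ} (hε : 0 < ε) (hd : 1 / ε + 4 ≤ (d : ℝ))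
    (hβ : 0 < β) (hβε : β ≤ 1 / 2 - ε) :
    |Ileak d β - 2 * β / ((d : ℝ) - 2) *
        logb 2 (((d : ℝ) - 2) * (1 - 2 * β) * exp 1 / (2 * β))| ≤
      2 / (ε * log 2) / (d : ℝ) ^ 2 := by
  have hd4 : (4 : ℝ) ≤ d := by linarith [one_div_pos.2 hε]
  have hd2 : (0 : ℝ) < d - 2 := by linarith
  have hinv : 1 / ((d : ℝ) - 2) < ε := (one_div_lt hd2 hε).2 (by linarith)
  have hβd : 2 * β / ((d : ℝ) - 2) < 1 - 2 * β := by
    calc 2 * β / ((d : ℝ) - 2) ≤ 1 / ((d : ℝ) - 2) := by gcongr; linarith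
      _ < 1 - 2 * β := by linarith
  have hlog2 : 0 < log 2 := log_pos one_lt_two
  calc _ ≤ (2 * β / ((d : ℝ) - 2)) ^ 2 / (1 - 2 * β) / log 2 :=
        abs_Ileak_sub_le_sq (by exact_mod_cast (by linarith : (3 : ℝ) ≤ d)) hβ hβd
    _ ≤ (1 / ((d : ℝ) - 2)) ^ 2 / (2 * ε) / log 2 := by
        have : 0 ≤ 2 * β / ((d : ℝ) - 2) := div_nonneg (by linarith) hd2.le
        gcongr <;> linarith
    _ ≤ (2 / (d : ℝ)) ^ 2 / (2 * ε) / log 2 := by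
        have : 1 / ((d : ℝ) - 2) ≤ 2 / d := by
          rw [div_le_div_iff₀ hd2 (by linarith)]
          linarith
        gcongr
    _ = 2 / (ε * log 2) / (d : ℝ) ^ 2 := by
        field_simp

/-- for `d ≥ 3` and `y_d` the unique positive root of `y^{d−1} + y − 1`,
with `β_0 = (1/2)[1 + 1/((d−2)(1−y_d))]⁻¹`, the function `I` is concave and increasing on
`[0, β_0]`, `β_0 < (1/2)(d−2)/(d−1)`, and as `d → ∞` (for `β` bounded away from `1/2`)
`I(β) = (2β/(d−2))·log₂((d−2)(1−2β)e/(2β)) + O(d^{−2})`. -/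
theorem Ileak_properties :
    (∀ d : ℕ, 3 ≤ d → ∀ yd : ℝ, 0 < yd → yd ^ (d - 1) + yd - 1 = 0 →
      let β0 : ℝ := (1 / 2) * (1 + 1 / (((d : ℝ) - 2) * (1 - yd)))⁻¹
      ConcaveOn ℝ (Set.Icc 0 β0) (Ileak d) ∧
      MonotoneOn (Ileak d) (Set.Icc 0 β0) ∧
      β0 < (1 / 2) * ((d : ℝ) - 2) / ((d : ℝ) - 1)) ∧
    (∀ ε : ℝ, 0 < ε → ∃ C : ℝ, ∃ d0 : ℕ, ∀ d : ℕ, d0 ≤ d →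
      ∀ β : ℝ, 0 < β → β ≤ 1 / 2 - ε →
        |Ileak d β -
            (2 * β / ((d : ℝ) - 2)) *
              Real.logb 2 (((d : ℝ) - 2) * (1 - 2 * β) * Real.exp 1 / (2 * β))| ≤
          C / (d : ℝ) ^ 2) := by
  refine ⟨fun d hd yd hyd hroot ↦ ?_, fun ε hε ↦ ?_⟩
  · have hlt := betaZero_lt hd hyd (by linarith [pow_pos hyd (d - 1)])
    have hconc : ConcaveOn ℝ (Icc 0 (betaZero d yd)) (Ileak d) :=
      (concaveOn_Ileak hd).subset (Icc_subset_Icc le_rfl hlt.le) (convex_Icc _ _)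
    exact ⟨hconc, hconc.monotoneOn_Icc_of_hasDerivWithinAt_nonneg
      (hasDerivAt_Ileak_betaZero hd hyd hroot).hasDerivWithinAt le_rfl, hlt⟩
  · refine ⟨2 / (ε * log 2), ⌈1 / ε⌉₊ + 4, fun d hd β hβ hβε ↦
      abs_Ileak_sub_le_div_sq hε ?_ hβ hβε⟩
    have : ((⌈1 / ε⌉₊ + 4 : ℕ) : ℝ) ≤ d := by exact_mod_cast hd
    push_cast at this
    linarith [Nat.le_ceil (1 / ε)]
end
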